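/- Every pattern in which each occurring variable occurs at least 4 times is 2-avoidable; that is, there exist infinitely many words over a 2-letter alphabet having no factor that is an instance of the pattern. -/

import Mathlib

/-!
If only one variable occurs, the pattern contains a fourth power `x⁴`, and the prefixes of the
Thue–Morse word `t` avoid fourth powers: since `t (2n) = t n` and `t (2n + 1) = t n + 1`, a
fourth power of even period `2ℓ` yields one of period `ℓ`, and one of odd period forces
`t (2m) = t (2m + 1)`.

If at least two variables occur, let `A n` be the number of binary words of length `n` avoiding
the pattern `p`. If `w` avoids `p` but `a :: w` does not, then `a :: w` begins with an instance
`h(p)` followed by a suffix of `w`, so `2 A(n) ≤ A(n+1) + ∑ₕ A(n + 1 - |h(p)|)`. Inductively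
`A(n - j) ≤ r ^ j A(n)` with `r = 10/17`, and since every variable occurs at least four times,
`∑ₕ r ^ |h(p)| ≤ (∑_{ℓ ≥ 1} (2 r⁴) ^ ℓ) ^ 2 ≤ 1/9`. Hence
`r A(n+1) ≥ (2r - 1/9) A(n) ≥ A(n)`, so `A(n) > 0` for all `n`.
-/

/-- A word `w` is an instance of the pattern `p` if there is a non-erasing
substitution (equivalently, a non-erasing monoid morphism on free monoids)
sending `p` to `w`. -/
def IsInstance {Δ α : Type*} (p : List Δ) (w : List α) : Prop :=
  ∃ f : Δ → List α, (∀ v, f v ≠ []) ∧ (p.map f).flatten = w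

/-- A word `w` avoids the pattern `p` if no factor of `w` is an instance of `p`. -/
def Avoids {Δ α : Type*} (w : List α) (p : List Δ) : Prop :=
  ∀ x : List α, x <:+: w → ¬ IsInstance p x

section Patterns

variable {Δ α : Type*}

theorem IsInstance.ne_nil {p : List Δ} {x : List α} (hp : p ≠ []) (h : IsInstance p x) :
    x ≠ [] := by
  obtain ⟨f, hf, rfl⟩ := h
  obtain ⟨v, q, rfl⟩ := List.exists_cons_of_ne_nil hp
  simp [hf v]

theorem IsInstance.exists_isInfix {p q : List Δ} {x : List α} (hq : q <:+: p)
    (h : IsInstance p x) : ∃ y, y <:+: x ∧ IsInstance q y := by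
  obtain ⟨f, hf, rfl⟩ := h
  obtain ⟨s, t, rfl⟩ := hq
  exact ⟨(q.map f).flatten, by simp [List.infix_append'], f, hf, rfl⟩

theorem Avoids.of_isInfix {p : List Δ} {w x : List α} (h : Avoids w p) (hx : x <:+: w) :
    Avoids x p := fun y hy => h y (hy.trans hx)

theorem Avoids.of_isInfix_pattern {p q : List Δ} {w : List α} (hq : q <:+: p) (h : Avoids w q) :
    Avoids w p := fun _ hx hpx =>
  let ⟨y, hy, hqy⟩ := hpx.exists_isInfix hq
  h y (hy.trans hx) hqy

theorem avoids_nil {p : List Δ} (hp : p ≠ []) : Avoids ([] : List α) p := fun _ hx hpx =>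
  hpx.ne_nil hp (List.eq_nil_of_infix_nil hx)

theorem exists_isPrefix_instance_of_cons {p : List Δ} {w : List α} {a : α} (hw : Avoids w p)
    (h : ¬ Avoids (a :: w) p) : ∃ x, x <+: a :: w ∧ IsInstance p x := by
  simp only [Avoids, not_forall, not_not] at h
  obtain ⟨x, hx, hpx⟩ := h
  rcases List.infix_cons_iff.mp hx with hx | hx
  · exact ⟨x, hx, hpx⟩
  · exact absurd hpx (hw x hx)

theorem exists_replicate_four_isInfix [DecidableEq Δ] {p : List Δ} (hp : p ≠ [])
    (hocc : ∀ v ∈ p, 4 ≤ p.count v) (hd : p.toFinset.card ≤ 1) :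
    ∃ v, List.replicate 4 v <:+: p := by
  obtain ⟨v, hv⟩ := List.exists_mem_of_ne_nil p hp
  have hp_eq : p = List.replicate 4 v ++ List.replicate (p.length - 4) v := by
    rw [← List.replicate_add, List.eq_replicate_iff]
    refine ⟨by have := (hocc v hv).trans List.count_le_length; omega, fun a ha => ?_⟩
    exact Finset.card_le_one.mp hd a (List.mem_toFinset.mpr ha) v (List.mem_toFinset.mpr hv)
  exact ⟨v, hp_eq ▸ List.infix_append [] _ _⟩

end Patterns

section ThueMorse

open Fin.NatCast in
def thueMorse (n : ℕ) : Fin 2 := (Nat.digits 2 n).sum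

@[simp] theorem thueMorse_two_mul (n : ℕ) : thueMorse (2 * n) = thueMorse n := by
  rcases Nat.eq_zero_or_pos n with rfl | hn
  · rfl
  · simp only [thueMorse, Nat.digits_def' one_lt_two (by omega : 0 < 2 * n), Nat.mul_mod_right,
      Nat.mul_div_cancel_left _ two_pos, List.sum_cons, zero_add]

open Fin.NatCast in
@[simp] theorem thueMorse_two_mul_add_one (n : ℕ) :
    thueMorse (2 * n + 1) = thueMorse n + 1 := by
  have hmod : (2 * n + 1) % 2 = 1 := by omega
  have hdiv : (2 * n + 1) / 2 = n := by omega
  rw [thueMorse, Nat.digits_def' one_lt_two (by omega), hmod, hdiv, List.sum_cons, Nat.cast_add,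
    Nat.cast_one, add_comm, thueMorse]

theorem fin_two_ne_add_one (a : Fin 2) : a ≠ a + 1 := by revert a; decide

theorem fin_two_add_one_add_one (a : Fin 2) : a + 1 + 1 = a := by revert a; decide

/-- The factor of length `4 * ℓ` of `t` starting at `s` has period `ℓ`. -/
def HasFourthPowerAt {β : Type*} (t : ℕ → β) (s ℓ : ℕ) : Prop :=
  ∀ i < 3 * ℓ, t (s + i) = t (s + i + ℓ)

theorem HasFourthPowerAt.apply_eq {β : Type*} {t : ℕ → β} {s ℓ : ℕ}
    (h : HasFourthPowerAt t s ℓ) {a : ℕ} (hsa : s ≤ a) (has : a < s + 3 * ℓ) :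
    t a = t (a + ℓ) := by
  simpa [Nat.add_sub_cancel' hsa] using h (a - s) (by omega)

theorem thueMorse_hasFourthPowerAt_half {s ℓ : ℕ} (h : HasFourthPowerAt thueMorse s (2 * ℓ)) :
    HasFourthPowerAt thueMorse ((s + 1) / 2) ℓ := by
  intro i hi
  have e := h.apply_eq (a := 2 * ((s + 1) / 2 + i)) (by omega) (by omega)
  rwa [← mul_add, thueMorse_two_mul, thueMorse_two_mul] at e

theorem thueMorse_not_hasFourthPowerAt_odd (s k : ℕ) :
    ¬ HasFourthPowerAt thueMorse s (2 * k + 1) := by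
  intro h
  have shift : ∀ n, s ≤ 2 * n → 2 * n + 1 < s + 3 * (2 * k + 1) →
      thueMorse (n + k) = thueMorse n + 1 ∧ thueMorse (n + k + 1) = thueMorse n + 1 := by
    intro n h1 h2
    have e0 := h.apply_eq (a := 2 * n) h1 (by omega)
    have e1 := h.apply_eq (a := 2 * n + 1) (by omega) h2
    rw [show 2 * n + (2 * k + 1) = 2 * (n + k) + 1 by ring, thueMorse_two_mul,
      thueMorse_two_mul_add_one] at e0
    rw [show 2 * n + 1 + (2 * k + 1) = 2 * (n + k + 1) by ring, thueMorse_two_mul,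
      thueMorse_two_mul_add_one] at e1
    exact ⟨by rw [e0, fin_two_add_one_add_one], e1.symm⟩
  rcases Nat.eq_zero_or_pos k with rfl | hk
  · exact fin_two_ne_add_one _ (shift ((s + 1) / 2) (by omega) (by omega)).1
  · -- with `n + k = 2 * m`, the two equations give `t (2 * m + 1) = t (2 * m)`
    obtain ⟨n, h1, h2, m, hm⟩ : ∃ n, s ≤ 2 * n ∧ 2 * n + 1 < s + 3 * (2 * k + 1) ∧
        ∃ m, n + k = 2 * m := by
      rcases Nat.even_or_odd ((s + 1) / 2 + k) with ⟨m, hm⟩ | ⟨m, hm⟩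
      · exact ⟨(s + 1) / 2, by omega, by omega, m, by omega⟩
      · exact ⟨(s + 1) / 2 + 1, by omega, by omega, m + 1, by omega⟩
    obtain ⟨e0, e1⟩ := shift n h1 h2
    rw [← e0, hm, thueMorse_two_mul_add_one, thueMorse_two_mul] at e1
    exact fin_two_ne_add_one _ e1.symm

theorem thueMorse_not_hasFourthPowerAt {ℓ : ℕ} (hℓ : 0 < ℓ) (s : ℕ) :
    ¬ HasFourthPowerAt thueMorse s ℓ := by
  induction ℓ using Nat.strong_induction_on generalizing s with
  | _ ℓ ih =>
    rcases Nat.even_or_odd' ℓ with ⟨k, rfl | rfl⟩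
    · exact fun h => ih k (by omega) (by omega) _ (thueMorse_hasFourthPowerAt_half h)
    · exact thueMorse_not_hasFourthPowerAt_odd s k

theorem HasFourthPowerAt.of_isInfix {β : Type*} {t : ℕ → β} {n : ℕ} {u : List β}
    (hu : u ++ u ++ u ++ u <:+: (List.range n).map t) :
    ∃ s, HasFourthPowerAt t s u.length := by
  obtain ⟨s, hlen, hget⟩ := List.infix_iff_getElem?.mp hu
  simp only [List.length_append, List.length_map, List.length_range] at hlen hget
  have hx : ∀ i < 4 * u.length, (u ++ u ++ u ++ u)[i]? = some (t (s + i)) := by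
    intro i hi
    rw [List.getElem?_eq_getElem (by simp only [List.length_append]; omega), ← hget i (by omega),
      List.getElem?_map, List.getElem?_range (by omega), add_comm]
    rfl
  refine ⟨s, fun i hi => Option.some_injective _ ?_⟩
  rw [← hx i (by omega), add_assoc, ← hx (i + u.length) (by omega)]
  have hyu : u ++ u ++ u ++ u = u ++ (u ++ u ++ u) := by simp
  rw [List.getElem?_append_left (l₁ := u ++ u ++ u) (by simp only [List.length_append]; omega),
    hyu, List.getElem?_append_right (l₁ := u) (by omega), Nat.add_sub_cancel]

theorem avoids_replicate_four_thueMorse {Δ : Type*} (v : Δ) (n : ℕ) :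
    Avoids ((List.range n).map thueMorse) (List.replicate 4 v) := by
  rintro x hx ⟨f, hf, rfl⟩
  obtain ⟨s, hs⟩ := HasFourthPowerAt.of_isInfix (u := f v) (by simpa using hx)
  exact thueMorse_not_hasFourthPowerAt (List.length_pos_iff.mpr (hf v)) s hs

end ThueMorse

section Substitution

variable {Δ α : Type*} [DecidableEq Δ]

def weight (p : List Δ) (g : p.toFinset → List α) : ℕ :=
  ∑ v : p.toFinset, p.count ↑v * (g v).length

theorem length_le_weight (p : List Δ) (g : p.toFinset → List α) (v : p.toFinset) :
    (g v).length ≤ weight p g :=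
  calc (g v).length ≤ p.count ↑v * (g v).length :=
        Nat.le_mul_of_pos_left _ (List.count_pos_iff.mpr (List.mem_toFinset.mp v.2))
    _ ≤ weight p g :=
        Finset.single_le_sum (f := fun v : p.toFinset => p.count ↑v * (g v).length)
          (fun _ _ => Nat.zero_le _) (Finset.mem_univ v)

theorem length_flatten_map (p : List Δ) (f : Δ → List α) :
    (p.map f).flatten.length = weight p (fun v => f v) := by
  rw [List.length_flatten, List.map_map, Finset.sum_list_map_count, weight,
    ← Finset.sum_coe_sort]
  rfl

def substitute (p : List Δ) (g : p.toFinset → List α) : List α :=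
  (p.map fun v => if h : v ∈ p.toFinset then g ⟨v, h⟩ else []).flatten

theorem substitute_restrict (p : List Δ) (f : Δ → List α) :
    substitute p (fun v => f v) = (p.map f).flatten := by
  rw [substitute]
  congr 1
  exact List.map_congr_left fun v hv => dif_pos (List.mem_toFinset.mpr hv)

end Substitution

theorem le_pow_mul_of_forall_le_mul_succ {K : Type*} [CommSemiring K] [PartialOrder K]
    [IsOrderedRing K] {a : ℕ → K} {r : K} (hr : 0 ≤ r) {n : ℕ}
    (h : ∀ k < n, a k ≤ r * a (k + 1)) {k : ℕ} (hk : k ≤ n) :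
    a k ≤ r ^ (n - k) * a n := by
  obtain ⟨d, rfl⟩ := Nat.exists_eq_add_of_le hk
  induction d generalizing k with
  | zero => simp
  | succ d ih =>
    calc a k ≤ r * a (k + 1) := h k (by omega)
      _ ≤ r * (r ^ d * a (k + 1 + d)) := by
          gcongr
          simpa using ih (k := k + 1) (fun j hj => h j (by omega)) (by omega)
      _ = r ^ (k + (d + 1) - k) * a (k + (d + 1)) := by
          rw [Nat.add_sub_cancel_left, add_right_comm, ← add_assoc, pow_succ', mul_assoc]

noncomputable section Counting

open Finset
open scoped Classical

variable {Δ α : Type*} [Fintype α]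

variable (α) in
def words (n : ℕ) : Finset (List α) := (univ : Finset (Fin n → α)).image List.ofFn

theorem mem_words {n : ℕ} {w : List α} : w ∈ words α n ↔ w.length = n := by
  refine ⟨?_, fun h => ?_⟩
  · simp only [words, mem_image, mem_univ, true_and]
    rintro ⟨f, rfl⟩
    exact List.length_ofFn
  · subst h
    exact mem_image.mpr ⟨fun i => w[i], mem_univ _, List.ofFn_getElem⟩

theorem card_words (n : ℕ) : #(words α n) = Fintype.card α ^ n := by
  rw [words, card_image_of_injective _ List.ofFn_injective, card_univ, Fintype.card_fun,
    Fintype.card_fin]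

variable (α) in
def avoiders (p : List Δ) (n : ℕ) : Finset (List α) := {w ∈ words α n | Avoids w p}

theorem mem_avoiders {p : List Δ} {n : ℕ} {w : List α} :
    w ∈ avoiders α p n ↔ w.length = n ∧ Avoids w p := by
  rw [avoiders, mem_filter, mem_words]

theorem avoiders_zero {p : List Δ} (hp : p ≠ []) : avoiders α p 0 = {[]} := by
  ext w
  rw [mem_avoiders, mem_singleton, List.length_eq_zero_iff]
  exact ⟨And.left, fun h => ⟨h, h ▸ avoids_nil hp⟩⟩

variable (α) in
def wordsIcc (N : ℕ) : Finset (List α) := (Icc 1 N).biUnion (words α)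

theorem mem_wordsIcc {N : ℕ} {w : List α} :
    w ∈ wordsIcc α N ↔ 1 ≤ w.length ∧ w.length ≤ N := by
  simp [wordsIcc, mem_words]

variable [DecidableEq Δ]

variable (α) in
def assignments (p : List Δ) (N : ℕ) : Finset (p.toFinset → List α) :=
  {g ∈ Fintype.piFinset fun _ => wordsIcc α N | weight p g ≤ N}

theorem exists_substitute_append_eq {p : List Δ} {w : List α} {a : α} (hw : Avoids w p)
    (h : ¬ Avoids (a :: w) p) :
    ∃ g ∈ assignments α p (w.length + 1),
      ∃ u ∈ avoiders α p (w.length + 1 - weight p g), substitute p g ++ u = a :: w := by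
  obtain ⟨x, ⟨u, hxu⟩, f, hf, rfl⟩ := exists_isPrefix_instance_of_cons hw h
  set g : p.toFinset → List α := fun v => f v
  have hlen : weight p g + u.length = w.length + 1 := by
    rw [← length_flatten_map, ← List.length_append, hxu, List.length_cons]
  have hg : g ∈ assignments α p (w.length + 1) := by
    refine mem_filter.mpr
      ⟨Fintype.mem_piFinset.mpr fun v => mem_wordsIcc.mpr ⟨?_, ?_⟩, by omega⟩
    · exact List.length_pos_iff.mpr (hf v)
    · exact (length_le_weight p g v).trans (by omega)
  refine ⟨g, hg, u, mem_avoiders.mpr ⟨by omega, hw.of_isInfix ?_⟩,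
    by rw [substitute_restrict, hxu]⟩
  -- the instance is nonempty, as otherwise it would be a factor of `w`
  obtain ⟨b, y, hby⟩ : ∃ b y, (p.map f).flatten = b :: y := by
    refine List.exists_cons_of_ne_nil fun hnil => hw [] List.nil_infix ?_
    exact hnil ▸ ⟨f, hf, rfl⟩
  rw [hby, List.cons_append, List.cons.injEq] at hxu
  exact hxu.2 ▸ (List.suffix_append y u).isInfix

theorem card_mul_card_avoiders_le (p : List Δ) (n : ℕ) :
    Fintype.card α * #(avoiders α p n) ≤ #(avoiders α p (n + 1)) +
      ∑ g ∈ assignments α p (n + 1), #(avoiders α p (n + 1 - weight p g)) := by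
  have hsub : (univ ×ˢ avoiders α p n).image (fun x => x.1 :: x.2) ⊆ avoiders α p (n + 1) ∪
      (assignments α p (n + 1)).biUnion
        fun g => (avoiders α p (n + 1 - weight p g)).image (substitute p g ++ ·) := by
    simp only [subset_iff, mem_image, mem_product, mem_univ, true_and, Prod.exists]
    rintro _ ⟨a, w, hw, rfl⟩
    rw [mem_avoiders] at hw
    by_cases h : Avoids (a :: w) p
    · exact mem_union_left _ (mem_avoiders.mpr ⟨by simp [hw.1], h⟩)
    · obtain ⟨g, hg, u, hu, hgu⟩ := exists_substitute_append_eq hw.2 h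
      rw [hw.1] at hg hu
      exact mem_union_right _ (mem_biUnion.mpr ⟨g, hg, mem_image.mpr ⟨u, hu, hgu⟩⟩)
  calc Fintype.card α * #(avoiders α p n)
      = #((univ ×ˢ avoiders α p n).image (fun x => x.1 :: x.2)) := by
        rw [card_image_of_injective _ fun x y h => Prod.ext (List.cons.inj h).1 (List.cons.inj h).2,
          card_product, card_univ]
    _ ≤ _ := (card_le_card hsub).trans (card_union_le _ _)
    _ ≤ _ := Nat.add_le_add_left (card_biUnion_le.trans (sum_le_sum fun _ _ => card_image_le)) _

theorem sum_wordsIcc_pow_length {K : Type*} [CommSemiring K] (x : K) (N : ℕ) :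
    ∑ w ∈ wordsIcc α N, x ^ w.length = ∑ ℓ ∈ Icc 1 N, (Fintype.card α * x) ^ ℓ := by
  have hdisj : (↑(Icc 1 N) : Set ℕ).PairwiseDisjoint (words α) := fun ℓ _ m _ hℓm =>
    disjoint_left.mpr fun w hℓ hm => hℓm ((mem_words.mp hℓ).symm.trans (mem_words.mp hm))
  rw [wordsIcc, sum_biUnion hdisj]
  refine sum_congr rfl fun ℓ _ => ?_
  rw [sum_congr rfl fun w hw => by rw [mem_words.mp hw], sum_const, card_words, nsmul_eq_mul,
    mul_pow, Nat.cast_pow]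

theorem sum_assignments_pow_weight_le {K : Type*} [Field K] [LinearOrder K] [IsStrictOrderedRing K]
    {r : K} (hr0 : 0 ≤ r) (hr1 : r ≤ 1) {p : List Δ} {k : ℕ}
    (hocc : ∀ v ∈ p, k ≤ p.count v) (N : ℕ) :
    ∑ g ∈ assignments α p N, r ^ weight p g ≤
      (∑ w ∈ wordsIcc α N, (r ^ k) ^ w.length) ^ #p.toFinset := by
  have hweight (g : p.toFinset → List α) : r ^ weight p g ≤ ∏ v, (r ^ k) ^ (g v).length :=
    calc r ^ weight p g ≤ r ^ ∑ v, k * (g v).length := by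
          apply pow_le_pow_of_le_one hr0 hr1
          exact sum_le_sum fun v _ => Nat.mul_le_mul_right _ (hocc v (List.mem_toFinset.mp v.2))
      _ = ∏ v, (r ^ k) ^ (g v).length := by simp_rw [← pow_mul, prod_pow_eq_pow_sum]
  calc ∑ g ∈ assignments α p N, r ^ weight p g
      ≤ ∑ g ∈ assignments α p N, ∏ v, (r ^ k) ^ (g v).length :=
        sum_le_sum fun g _ => hweight g
    _ ≤ ∑ g ∈ Fintype.piFinset fun _ => wordsIcc α N, ∏ v, (r ^ k) ^ (g v).length :=
        sum_le_sum_of_subset_of_nonneg (filter_subset _ _) fun _ _ _ => by positivity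
    _ = ∏ _v : p.toFinset, ∑ w ∈ wordsIcc α N, (r ^ k) ^ w.length := by
        rw [prod_univ_sum]
    _ = _ := by rw [prod_const, card_univ, Fintype.card_coe]

theorem sum_assignments_pow_weight_le_one_ninth {p : List Δ} (hocc : ∀ v ∈ p, 4 ≤ p.count v)
    (hd : 2 ≤ #p.toFinset) (N : ℕ) :
    ∑ g ∈ assignments (Fin 2) p N, (10 / 17 : ℚ) ^ weight p g ≤ 1 / 9 := by
  have hgeom : ∑ w ∈ wordsIcc (Fin 2) N, ((10 / 17 : ℚ) ^ 4) ^ w.length ≤ 1 / 3 := by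
    rw [sum_wordsIcc_pow_length, ← Ico_add_one_right_eq_Icc]
    refine (geom_sum_Ico_le_of_lt_one (by positivity) (by norm_num)).trans ?_
    norm_num
  calc _ ≤ (∑ w ∈ wordsIcc (Fin 2) N, ((10 / 17 : ℚ) ^ 4) ^ w.length) ^ #p.toFinset :=
        sum_assignments_pow_weight_le (by norm_num) (by norm_num) hocc _
    _ ≤ (1 / 3) ^ #p.toFinset := by gcongr
    _ ≤ (1 / 3) ^ 2 := pow_le_pow_of_le_one (by norm_num) (by norm_num) hd
    _ = 1 / 9 := by norm_num

theorem card_avoiders_le_mul_card_avoiders_succ {p : List Δ} (hocc : ∀ v ∈ p, 4 ≤ p.count v)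
    (hd : 2 ≤ #p.toFinset) (n : ℕ) :
    (#(avoiders (Fin 2) p n) : ℚ) ≤ 10 / 17 * #(avoiders (Fin 2) p (n + 1)) := by
  induction n using Nat.strong_induction_on with
  | _ n ih =>
  set r : ℚ := 10 / 17
  set A : ℕ → ℚ := fun m => #(avoiders (Fin 2) p m)
  obtain ⟨v₀⟩ : Nonempty p.toFinset := (card_pos.mp (by omega)).to_subtype
  have hshift : ∀ g ∈ assignments (Fin 2) p (n + 1),
      r * A (n + 1 - weight p g) ≤ r ^ weight p g * A n := by
    intro g hg
    obtain ⟨hg, hwt⟩ := mem_filter.mp hg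
    have hpos : 1 ≤ weight p g :=
      (mem_wordsIcc.mp (Fintype.mem_piFinset.mp hg v₀)).1.trans (length_le_weight p g v₀)
    calc r * A (n + 1 - weight p g) ≤ r * (r ^ (n - (n + 1 - weight p g)) * A n) := by
          gcongr
          exact le_pow_mul_of_forall_le_mul_succ (by norm_num) ih (by omega)
      _ = r ^ weight p g * A n := by
          rw [← mul_assoc, ← pow_succ', show n - (n + 1 - weight p g) + 1 = weight p g by omega]
  have hcount : 2 * A n ≤ A (n + 1) + ∑ g ∈ assignments (Fin 2) p (n + 1),
      A (n + 1 - weight p g) := by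
    have h := card_mul_card_avoiders_le (α := Fin 2) p n
    rw [Fintype.card_fin] at h
    simp only [A]
    exact_mod_cast h
  have hrest :
      r * ∑ g ∈ assignments (Fin 2) p (n + 1), A (n + 1 - weight p g) ≤ 1 / 9 * A n :=
    calc _ ≤ ∑ g ∈ assignments (Fin 2) p (n + 1), r ^ weight p g * A n := by
          rw [mul_sum]; exact sum_le_sum hshift
      _ ≤ 1 / 9 * A n := by
          rw [← sum_mul]
          gcongr
          exact sum_assignments_pow_weight_le_one_ninth hocc hd _
  have hA : 0 ≤ A n := by positivity
  have hscaled := mul_le_mul_of_nonneg_left hcount (by norm_num : (0 : ℚ) ≤ r)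
  change A n ≤ r * A (n + 1)
  simp only [r] at hscaled hrest ⊢
  linarith

theorem avoiders_nonempty {p : List Δ} (hp : p ≠ []) (hocc : ∀ v ∈ p, 4 ≤ p.count v)
    (hd : 2 ≤ #p.toFinset) (n : ℕ) : (avoiders (Fin 2) p n).Nonempty := by
  induction n with
  | zero => simp [avoiders_zero hp]
  | succ n ih =>
    have hgrowth := card_avoiders_le_mul_card_avoiders_succ hocc hd n
    have hpos : (0 : ℚ) < #(avoiders (Fin 2) p n) := by exact_mod_cast ih.card_pos
    have : (0 : ℚ) < #(avoiders (Fin 2) p (n + 1)) := by linarith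
    exact card_pos.mp (by exact_mod_cast this)

end Counting

/-- Every pattern in which each occurring variable occurs at least 4 times is
2-avoidable. -/
theorem avoid_two_of_occurrences {Δ : Type*} [DecidableEq Δ]
    (p : List Δ) (hp : p ≠ []) (hocc : ∀ v ∈ p, 4 ≤ p.count v) :
    {w : List (Fin 2) | Avoids w p}.Infinite := by
  suffices h : ∀ n, ∃ w : List (Fin 2), w.length = n ∧ Avoids w p from
    Set.Infinite.of_image List.length <| Set.infinite_univ.mono fun n _ =>
      let ⟨w, hw, hwp⟩ := h n; ⟨w, hwp, hw⟩
  rcases le_or_gt p.toFinset.card 1 with hd | hd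
  · obtain ⟨v, hv⟩ := exists_replicate_four_isInfix hp hocc hd
    exact fun n => ⟨_, by simp, (avoids_replicate_four_thueMorse v n).of_isInfix_pattern hv⟩
  · exact fun n =>
      let ⟨w, hw⟩ := avoiders_nonempty hp hocc hd n
      ⟨w, mem_avoiders.mp hw⟩
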